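/- arXiv:2410.10772 — 5 statements merged into one kernel-verified Lean document; each statement's English description precedes it below -/
import Mathlib

section
/- Let ε ∈ ℝⁿ be a random vector with independent mean-zero coordinates having common variance σ² and common finite fourth moment ε₄ = E[ε_i⁴], and let M ∈ ℝ^{n×n} be a fixed matrix. Then E[(εᵀ M ε)²] ≤ ε₄ ( 2‖M‖_F² + (trace M)² ). Moreover, if all entries of M are nonnegative, then E[(εᵀ M ε)²] ≥ σ⁴ ‖M‖_F². -/
/-!
Expanding the square, `E[(εᵀMε)²] = ∑ M i j * M k l * E[ε i ε j ε k ε l]`. By independence and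
centring, a fourth moment vanishes as soon as one index occurs only once, so
`E[ε i ε j ε k ε l] = (ε₄ - 3σ⁴)[i = j = k = l] + σ⁴([i = j][k = l] + [i = k][j = l] + [i = l][j = k])`
and hence `E[(εᵀMε)²] = (ε₄ - 3σ⁴) ∑ M i i ² + σ⁴ ((tr M)² + ‖M‖_F² + tr (M M))`.
Both bounds follow from `σ⁴ ≤ ε₄` (Jensen), `∑ M i i ² ≤ ‖M‖_F²` and `tr (M M) ≤ ‖M‖_F²`,
and, for nonnegative entries, `∑ M i i ² ≤ min ((tr M)², tr (M M))`.
-/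

open MeasureTheory ProbabilityTheory

namespace Matrix

variable {ι : Type*} [Fintype ι] (M : Matrix ι ι ℝ)

theorem sum_mul_mul_pairings_eq [DecidableEq ι] (a b : ℝ) :
    ∑ i, ∑ j, ∑ k, ∑ l, M i j * M k l * ((if i = j ∧ j = k ∧ k = l then a else 0) +
        b * ((if i = j ∧ k = l then 1 else 0) + (if i = k ∧ j = l then 1 else 0) +
          (if i = l ∧ j = k then 1 else 0))) =
      a * ∑ i, M i i ^ 2 + b * (M.trace ^ 2 + ∑ i, ∑ j, M i j ^ 2 + ∑ i, ∑ j, M i j * M j i) := by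
  simp only [mul_add, Finset.sum_add_distrib, mul_ite, mul_zero, mul_one, ite_and,
    Finset.sum_ite_eq, Finset.mem_univ, if_true, Finset.sum_ite_irrel, Finset.sum_const_zero]
  rw [Matrix.trace, sq, Finset.sum_mul_sum]
  simp only [Matrix.diag, sq, Finset.mul_sum, mul_comm]

theorem sum_diag_sq_le_sum_sq : ∑ i, M i i ^ 2 ≤ ∑ i, ∑ j, M i j ^ 2 :=
  Finset.sum_le_sum fun i _ =>
    Finset.single_le_sum (f := fun j => M i j ^ 2) (fun _ _ => sq_nonneg _) (Finset.mem_univ i)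

theorem sum_mul_swap_le_sum_sq : ∑ i, ∑ j, M i j * M j i ≤ ∑ i, ∑ j, M i j ^ 2 := by
  have hswap : ∑ i, ∑ j, M j i ^ 2 = ∑ i, ∑ j, M i j ^ 2 := Finset.sum_comm
  calc ∑ i, ∑ j, M i j * M j i ≤ ∑ i, ∑ j, (M i j ^ 2 + M j i ^ 2) / 2 := by
        gcongr with i _ j _
        nlinarith [sq_nonneg (M i j - M j i)]
    _ = ∑ i, ∑ j, M i j ^ 2 := by
        simp only [add_div, Finset.sum_add_distrib, ← Finset.sum_div, hswap]
        ring

variable {M}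

theorem sum_diag_sq_le_trace_sq_of_nonneg (hM : ∀ i, 0 ≤ M i i) :
    ∑ i, M i i ^ 2 ≤ M.trace ^ 2 :=
  Finset.sum_sq_le_sq_sum_of_nonneg fun i _ => hM i

theorem sum_diag_sq_le_sum_mul_swap_of_nonneg (hM : ∀ i j, 0 ≤ M i j) :
    ∑ i, M i i ^ 2 ≤ ∑ i, ∑ j, M i j * M j i :=
  Finset.sum_le_sum fun i _ => by
    simpa [sq] using Finset.single_le_sum (f := fun j => M i j * M j i)
      (fun j _ => mul_nonneg (hM i j) (hM j i)) (Finset.mem_univ i)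

end Matrix

section Moments

variable {Ω ι : Type*} [MeasurableSpace Ω] {μ : Measure Ω}

theorem MeasureTheory.MemLp.integrable_mul_mul_mul {f g h k : Ω → ℝ} (hf : MemLp f 4 μ)
    (hg : MemLp g 4 μ) (hh : MemLp h 4 μ) (hk : MemLp k 4 μ) :
    Integrable (fun ω => f ω * g ω * h ω * k ω) μ := by
  have hprod := MemLp.prod' (s := Finset.univ) (f := ![f, g, h, k]) (p := fun _ => 4) (μ := μ)
    (by simp [Fin.forall_fin_succ, *])
  have hexponent : (∑ _ : Fin 4, (4 : ENNReal)⁻¹)⁻¹ = 1 := by simp [ENNReal.mul_inv_cancel]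
  rw [hexponent] at hprod
  simpa [Fin.prod_univ_four] using memLp_one_iff_integrable.1 hprod

theorem sq_integral_sq_le_integral_pow_four [IsProbabilityMeasure μ] {X : Ω → ℝ}
    (hX : MemLp X 4 μ) : (∫ ω, X ω ^ 2 ∂μ) ^ 2 ≤ ∫ ω, X ω ^ 4 ∂μ := by
  have hX2 : MemLp (fun ω => X ω ^ 2) 2 μ := by
    refine (memLp_two_iff_integrable_sq (hX.1.pow 2)).2 ?_
    simpa [← pow_mul, pow_succ, mul_assoc] using hX.integrable_mul_mul_mul hX hX hX
  have hvar := variance_nonneg (fun ω => X ω ^ 2) μ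
  rw [variance_eq_sub hX2] at hvar
  simp only [Pi.pow_apply, ← pow_mul] at hvar
  linarith

variable {ε : ι → Ω → ℝ}

theorem ProbabilityTheory.iIndepFun.integral_mul_mul_mul_eq_zero [DecidableEq ι]
    (hindep : iIndepFun ε μ) (hmeas : ∀ i, Measurable (ε i)) {a b c d : ι}
    (ha : ∫ ω, ε a ω ∂μ = 0) (hb : b ≠ a) (hc : c ≠ a) (hd : d ≠ a) :
    ∫ ω, ε a ω * ε b ω * ε c ω * ε d ω ∂μ = 0 := by
  have hdisj : Disjoint ({a} : Finset ι) {b, c, d} := by simp [hb.symm, hc.symm, hd.symm]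
  have hind : IndepFun (ε a) (fun ω => ε b ω * (ε c ω * ε d ω)) μ :=
    (hindep.indepFun_finset _ _ hdisj hmeas).comp
      (φ := fun v : ({a} : Finset ι) → ℝ => v ⟨a, by simp⟩)
      (ψ := fun v : ({b, c, d} : Finset ι) → ℝ =>
        v ⟨b, by simp⟩ * (v ⟨c, by simp⟩ * v ⟨d, by simp⟩))
      (by fun_prop) (by fun_prop)
  simp_rw [mul_assoc]
  rw [hind.integral_fun_mul_eq_mul_integral (hmeas a).aestronglyMeasurable (by fun_prop), ha,
    zero_mul]

theorem ProbabilityTheory.iIndepFun.integral_sq_mul_sq (hindep : iIndepFun ε μ)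
    (hmeas : ∀ i, Measurable (ε i)) {a b : ι} (hab : a ≠ b) :
    ∫ ω, ε a ω ^ 2 * ε b ω ^ 2 ∂μ = (∫ ω, ε a ω ^ 2 ∂μ) * ∫ ω, ε b ω ^ 2 ∂μ :=
  ((hindep.indepFun hab).comp (φ := fun x => x ^ 2) (ψ := fun x => x ^ 2) (by fun_prop)
    (by fun_prop)).integral_fun_mul_eq_mul_integral (by fun_prop) (by fun_prop)

theorem ProbabilityTheory.iIndepFun.integral_mul_mul_mul_eq [DecidableEq ι]
    (hindep : iIndepFun ε μ) (hmeas : ∀ i, Measurable (ε i)) {σ2 ε4 : ℝ}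
    (hmean : ∀ i, ∫ ω, ε i ω ∂μ = 0) (hvar : ∀ i, ∫ ω, ε i ω ^ 2 ∂μ = σ2)
    (hfour : ∀ i, ∫ ω, ε i ω ^ 4 ∂μ = ε4) (i j k l : ι) :
    ∫ ω, ε i ω * ε j ω * ε k ω * ε l ω ∂μ =
      (if i = j ∧ j = k ∧ k = l then ε4 - 3 * σ2 ^ 2 else 0) +
        σ2 ^ 2 * ((if i = j ∧ k = l then 1 else 0) + (if i = k ∧ j = l then 1 else 0) +
          (if i = l ∧ j = k then 1 else 0)) := by
  have hsingle {a b c d : ι} (hb : b ≠ a) (hc : c ≠ a) (hd : d ≠ a)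
      (h : ∀ ω, ε i ω * ε j ω * ε k ω * ε l ω = ε a ω * ε b ω * ε c ω * ε d ω) :
      ∫ ω, ε i ω * ε j ω * ε k ω * ε l ω ∂μ = 0 := by
    simp_rw [h]
    exact hindep.integral_mul_mul_mul_eq_zero hmeas (hmean a) hb hc hd
  have hpair {a b : ι} (hab : a ≠ b)
      (h : ∀ ω, ε i ω * ε j ω * ε k ω * ε l ω = ε a ω ^ 2 * ε b ω ^ 2) :
      ∫ ω, ε i ω * ε j ω * ε k ω * ε l ω ∂μ = σ2 ^ 2 := by
    simp_rw [h]
    rw [hindep.integral_sq_mul_sq hmeas hab, hvar, hvar, sq]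
  rcases eq_or_ne i j with rfl | hij <;> rcases eq_or_ne k l with rfl | hkl
  · rcases eq_or_ne i k with rfl | hik
    · have h4 : ∫ ω, ε i ω * ε i ω * ε i ω * ε i ω ∂μ = ε4 := by
        rw [← hfour i]
        simp only [pow_succ, pow_zero, one_mul]
      simp only [h4, and_self, if_true]
      ring
    · simp [hpair hik fun _ => by ring, hik]
  · rcases eq_or_ne k i with rfl | hki
    · rw [hsingle (a := l) hkl hkl hkl fun _ => by ring]
      grind
    · rw [hsingle (a := k) hki.symm hki.symm hkl.symm fun _ => by ring]
      grind
  · rcases eq_or_ne i k with rfl | hik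
    · rw [hsingle (a := j) hij hij hij fun _ => by ring]
      grind
    · rw [hsingle (a := i) hij.symm hik.symm hik.symm fun _ => by ring]
      grind
  · rcases eq_or_ne i k with rfl | hik
    · rcases eq_or_ne j l with rfl | hjl
      · simp [hpair hij fun _ => by ring, hij]
      · rw [hsingle (a := j) hij hij hjl.symm fun _ => by ring]
        grind
    · rcases eq_or_ne i l with rfl | hil
      · rcases eq_or_ne j k with rfl | hjk
        · simp [hpair hij fun _ => by ring, hij]
        · rw [hsingle (a := j) hij hjk.symm hij fun _ => by ring]
          grind
      · rw [hsingle (a := i) hij.symm hik.symm hil.symm fun _ => by ring]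
        grind

variable [Fintype ι]

theorem integral_quadForm_sq_eq_sum
    (hint : ∀ i j k l, Integrable (fun ω => ε i ω * ε j ω * ε k ω * ε l ω) μ)
    (M : Matrix ι ι ℝ) :
    ∫ ω, (∑ i, ∑ j, ε i ω * M i j * ε j ω) ^ 2 ∂μ =
      ∑ i, ∑ j, ∑ k, ∑ l, M i j * M k l * ∫ ω, ε i ω * ε j ω * ε k ω * ε l ω ∂μ := by
  have hexpand (ω : Ω) : (∑ i, ∑ j, ε i ω * M i j * ε j ω) ^ 2 =
      ∑ i, ∑ j, ∑ k, ∑ l, M i j * M k l * (ε i ω * ε j ω * ε k ω * ε l ω) := by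
    simp_rw [sq, Finset.sum_mul_sum]
    refine Finset.sum_congr rfl fun i _ => ?_
    rw [Finset.sum_comm]
    exact Finset.sum_congr rfl fun j _ => Finset.sum_congr rfl fun k _ =>
      Finset.sum_congr rfl fun l _ => by ring
  simp_rw [hexpand]
  simp (disch := fun_prop) only [integral_finsetSum, integral_const_mul]

theorem ProbabilityTheory.iIndepFun.integral_quadForm_sq_eq [DecidableEq ι]
    (hindep : iIndepFun ε μ) (hmeas : ∀ i, Measurable (ε i))
    (hint : ∀ i j k l, Integrable (fun ω => ε i ω * ε j ω * ε k ω * ε l ω) μ) {σ2 ε4 : ℝ}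
    (hmean : ∀ i, ∫ ω, ε i ω ∂μ = 0) (hvar : ∀ i, ∫ ω, ε i ω ^ 2 ∂μ = σ2)
    (hfour : ∀ i, ∫ ω, ε i ω ^ 4 ∂μ = ε4) (M : Matrix ι ι ℝ) :
    ∫ ω, (∑ i, ∑ j, ε i ω * M i j * ε j ω) ^ 2 ∂μ =
      (ε4 - 3 * σ2 ^ 2) * ∑ i, M i i ^ 2 +
        σ2 ^ 2 * (M.trace ^ 2 + ∑ i, ∑ j, M i j ^ 2 + ∑ i, ∑ j, M i j * M j i) := by
  rw [integral_quadForm_sq_eq_sum hint M]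
  simp only [hindep.integral_mul_mul_mul_eq hmeas hmean hvar hfour]
  exact M.sum_mul_mul_pairings_eq _ _

end Moments

/-- For a random vector `ε` with independent mean-zero coordinates of
common variance `σ²` and common finite fourth moment `ε₄`, and a fixed matrix `M`:
`E[(εᵀMε)²] ≤ ε₄ (2‖M‖_F² + (trace M)²)`, and if `M` has nonnegative entries then
`E[(εᵀMε)²] ≥ σ⁴ ‖M‖_F²`. -/
theorem stmt_9 {Ω : Type*} [MeasurableSpace Ω] (μ : Measure Ω)
    [IsProbabilityMeasure μ] {n : ℕ}
    (ε : Fin n → Ω → ℝ) (hmeas : ∀ i, Measurable (ε i))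
    (hindep : iIndepFun ε μ)
    (hL4 : ∀ i, MemLp (ε i) 4 μ)
    (σ2 ε4 : ℝ)
    (hmean : ∀ i, (∫ ω, ε i ω ∂μ) = 0)
    (hvar : ∀ i, (∫ ω, (ε i ω) ^ 2 ∂μ) = σ2)
    (hfour : ∀ i, (∫ ω, (ε i ω) ^ 4 ∂μ) = ε4)
    (M : Matrix (Fin n) (Fin n) ℝ) :
    (∫ ω, (∑ i, ∑ j, ε i ω * M i j * ε j ω) ^ 2 ∂μ) ≤
        ε4 * (2 * (∑ i, ∑ j, (M i j) ^ 2) + M.trace ^ 2) ∧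
      ((∀ i j, 0 ≤ M i j) →
        σ2 ^ 2 * (∑ i, ∑ j, (M i j) ^ 2) ≤
          (∫ ω, (∑ i, ∑ j, ε i ω * M i j * ε j ω) ^ 2 ∂μ)) := by
  -- `σ⁴ ≤ ε₄` needs a coordinate: for `n = 0` the moments `σ2`, `ε4` are unconstrained.
  rcases isEmpty_or_nonempty (Fin n) with _ | ⟨⟨i₀⟩⟩
  · simp [Matrix.trace]
  have hσε : σ2 ^ 2 ≤ ε4 := by
    simpa [hvar, hfour] using sq_integral_sq_le_integral_pow_four (hL4 i₀)
  have hint i j k l := (hL4 i).integrable_mul_mul_mul (hL4 j) (hL4 k) (hL4 l)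
  rw [hindep.integral_quadForm_sq_eq hmeas hint hmean hvar hfour M]
  have hdiag := M.sum_diag_sq_le_sum_sq
  have hswap := M.sum_mul_swap_le_sum_sq
  have hdiag_nonneg : 0 ≤ ∑ i, M i i ^ 2 := by positivity
  have hσ : 0 ≤ σ2 ^ 2 := sq_nonneg σ2
  refine ⟨?_, fun hM => ?_⟩
  · nlinarith [mul_nonneg (sub_nonneg.2 hσε) (sq_nonneg M.trace),
      mul_nonneg (sub_nonneg.2 hσε) (sub_nonneg.2 hdiag), mul_nonneg (hσ.trans hσε) hdiag_nonneg,
      mul_nonneg hσ (sub_nonneg.2 hswap), mul_nonneg hσ hdiag_nonneg]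
  · have htrace := Matrix.sum_diag_sq_le_trace_sq_of_nonneg fun i => hM i i
    have hswap' := Matrix.sum_diag_sq_le_sum_mul_swap_of_nonneg hM
    nlinarith [mul_nonneg (sub_nonneg.2 hσε) hdiag_nonneg, mul_nonneg hσ (sub_nonneg.2 htrace),
      mul_nonneg hσ (sub_nonneg.2 hswap')]
end

section
/- Let ε ∈ ℝⁿ and T ∈ ℝⁿ be independent random vectors. Suppose ε has independent mean-zero coordinates with common variance, common third moment, and common finite fourth moment ε₄ = E[ε_i⁴]; and T has independent coordinates with common mean τ, and centered coordinates T_i − τ having common variance, common third moment, and common finite fourth moment τ₄ = E[(T_i − τ)⁴]. Let M ∈ ℝ^{n×n} be a fixed matrix. Then E[( εᵀ M (T − τ 1_n) )⁴] ≤ 30 ε₄ τ₄ ‖M‖_F⁴. -/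
/-
Write `V = T - τ 1` and `A = M V`, so that `εᵀ M V = ∑ i, ε i * A i`. Expanding the fourth power
and using the independence of `ε` and `V`,
`E[(εᵀ M V)⁴] = ∑_{abcd} E[ε_a ε_b ε_c ε_d] E[A_a A_b A_c A_d]`.
For a centred independent family with fourth moments at most `m₄`, a mixed moment
`E[X_a X_b X_c X_d]` vanishes unless the four indices split into two pairs of equal indices, and
is at most `m₄` by AM-GM; so it is at most `m₄` times the number of such splittings. Summing
against coefficients and using Cauchy-Schwarz gives `|E[∏ₖ ⟨xₖ, X⟩]| ≤ 3 m₄ ∏ₖ ‖xₖ‖`. Applied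
first to `V` with the rows of `M`, then to `ε` with the row norms of `M`, this yields
`E[(εᵀ M V)⁴] ≤ 9 ε₄ τ₄ ‖M‖_F⁴`.
-/

open MeasureTheory ProbabilityTheory Finset

section Algebra

variable {ι : Type*} [Fintype ι]

lemma sum_mul_sum_mul_sum_mul_sum (x y z w : ι → ℝ) :
    (∑ a, x a) * (∑ b, y b) * (∑ c, z c) * (∑ d, w d) =
      ∑ a, ∑ b, ∑ c, ∑ d, x a * y b * z c * w d := by
  simp only [← mul_sum, ← sum_mul]

lemma sum_mul_sum_mul_sum_mul_sum_of_mul (x y z w x' y' z' w' : ι → ℝ) :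
    (∑ a, x a * x' a) * (∑ b, y b * y' b) * (∑ c, z c * z' c) * (∑ d, w d * w' d) =
      ∑ a, ∑ b, ∑ c, ∑ d, x a * y b * z c * w d * (x' a * y' b * z' c * w' d) := by
  rw [sum_mul_sum_mul_sum_mul_sum]
  simp only [mul_mul_mul_comm]

variable [DecidableEq ι]

def pairingCount (a b c d : ι) : ℝ :=
  (if a = b ∧ c = d then 1 else 0) + (if a = c ∧ b = d then 1 else 0) +
    (if a = d ∧ b = c then 1 else 0)

lemma sum_mul_pairingCount (x y z w : ι → ℝ) :
    ∑ a, ∑ b, ∑ c, ∑ d, x a * y b * z c * w d * pairingCount a b c d =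
      (∑ a, x a * y a) * (∑ c, z c * w c) + (∑ a, x a * z a) * (∑ b, y b * w b) +
        (∑ a, x a * w a) * (∑ b, y b * z b) := by
  simp only [pairingCount, ite_and, mul_add, mul_ite, mul_one, mul_zero, sum_add_distrib,
    sum_ite_irrel, sum_const_zero, sum_ite_eq, mem_univ, if_true, sum_mul_sum]
  ac_rfl

lemma sum_abs_mul_pairingCount_le (x y z w : ι → ℝ) :
    ∑ a, ∑ b, ∑ c, ∑ d, |x a * y b * z c * w d| * pairingCount a b c d ≤
      3 * (√(∑ a, x a ^ 2) * √(∑ a, y a ^ 2) * √(∑ a, z a ^ 2) * √(∑ a, w a ^ 2)) := by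
  have cs : ∀ u v : ι → ℝ, ∑ a, |u a| * |v a| ≤ √(∑ a, u a ^ 2) * √(∑ a, v a ^ 2) := by
    intro u v
    simpa only [sq_abs] using Real.sum_mul_le_sqrt_mul_sqrt univ (|u ·|) (|v ·|)
  have cs2 : ∀ u v s t : ι → ℝ, (∑ a, |u a| * |v a|) * (∑ a, |s a| * |t a|) ≤
      √(∑ a, u a ^ 2) * √(∑ a, v a ^ 2) * (√(∑ a, s a ^ 2) * √(∑ a, t a ^ 2)) := fun u v s t =>
    mul_le_mul (cs u v) (cs s t) (by positivity) (by positivity)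
  simp only [abs_mul]
  rw [sum_mul_pairingCount]
  linarith [cs2 x y z w, cs2 x z y w, cs2 x w y z]

end Algebra

section Moments

variable {Ω : Type*} [MeasurableSpace Ω] {μ : Measure Ω}

lemma abs_mul_mul_mul_le (p q r s : ℝ) : |p * q * r * s| ≤ (p ^ 4 + q ^ 4 + r ^ 4 + s ^ 4) / 4 := by
  rw [abs_le]
  constructor <;> nlinarith [sq_nonneg (p * q - r * s), sq_nonneg (p * q + r * s),
    sq_nonneg (p ^ 2 - q ^ 2), sq_nonneg (r ^ 2 - s ^ 2)]

lemma MeasureTheory.MemLp.integrable_pow_four {f : Ω → ℝ} (hf : MemLp f 4 μ) :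
    Integrable (fun ω => f ω ^ 4) μ := by
  simpa only [Real.norm_eq_abs, Even.pow_abs (by decide : Even 4)] using
    hf.integrable_norm_pow (p := 4) (by norm_num)

section
variable {f g h k : Ω → ℝ} (hf : MemLp f 4 μ) (hg : MemLp g 4 μ) (hh : MemLp h 4 μ)
  (hk : MemLp k 4 μ)
include hf hg hh hk

lemma integrable_mul_mul_mul_of_memLp :
    Integrable (fun ω => f ω * g ω * h ω * k ω) μ := by
  refine Integrable.mono' ((((hf.integrable_pow_four.add hg.integrable_pow_four).add
    hh.integrable_pow_four).add hk.integrable_pow_four).div_const 4) ?_ ?_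
  · exact ((hf.1.mul hg.1).mul hh.1).mul hk.1
  · exact ae_of_all _ fun ω => by simpa using abs_mul_mul_mul_le (f ω) (g ω) (h ω) (k ω)

lemma abs_integral_mul_mul_mul_le :
    |∫ ω, f ω * g ω * h ω * k ω ∂μ| ≤
      ((∫ ω, f ω ^ 4 ∂μ) + (∫ ω, g ω ^ 4 ∂μ) + (∫ ω, h ω ^ 4 ∂μ) + ∫ ω, k ω ^ 4 ∂μ) / 4 := by
  have h4 := fun {u : Ω → ℝ} (hu : MemLp u 4 μ) => hu.integrable_pow_four
  calc |∫ ω, f ω * g ω * h ω * k ω ∂μ| ≤ ∫ ω, |f ω * g ω * h ω * k ω| ∂μ :=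
        abs_integral_le_integral_abs
    _ ≤ ∫ ω, (f ω ^ 4 + g ω ^ 4 + h ω ^ 4 + k ω ^ 4) / 4 ∂μ :=
        integral_mono (integrable_mul_mul_mul_of_memLp hf hg hh hk).abs
          (((((h4 hf).add (h4 hg)).add (h4 hh)).add (h4 hk)).div_const 4)
          fun ω => abs_mul_mul_mul_le _ _ _ _
    _ = _ := by
        rw [integral_div, integral_add ?_ (h4 hk), integral_add ?_ (h4 hh),
          integral_add (h4 hf) (h4 hg)]
        exacts [(h4 hf).add (h4 hg), ((h4 hf).add (h4 hg)).add (h4 hh)]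

end

lemma integral_sum_sum_sum_sum {ι : Type*} [Fintype ι] {F : ι → ι → ι → ι → Ω → ℝ}
    (hF : ∀ a b c d, Integrable (F a b c d) μ) :
    ∫ ω, ∑ a, ∑ b, ∑ c, ∑ d, F a b c d ω ∂μ = ∑ a, ∑ b, ∑ c, ∑ d, ∫ ω, F a b c d ω ∂μ := by
  have hsum := fun (s : Finset ι) {f : ι → Ω → ℝ} (hf : ∀ i, Integrable (f i) μ) =>
    integral_finsetSum s fun i _ => hf i
  have hint := fun (s : Finset ι) {f : ι → Ω → ℝ} (hf : ∀ i, Integrable (f i) μ) =>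
    integrable_finsetSum s fun i _ => hf i
  rw [hsum _ fun a => hint _ fun b => hint _ fun c => hint _ fun d => hF a b c d]
  refine sum_congr rfl fun a _ => ?_
  rw [hsum _ fun b => hint _ fun c => hint _ fun d => hF a b c d]
  refine sum_congr rfl fun b _ => ?_
  rw [hsum _ fun c => hint _ fun d => hF a b c d]
  exact sum_congr rfl fun c _ => hsum _ fun d => hF a b c d

lemma ProbabilityTheory.iIndepFun.indepFun_sumElim {ι κ β : Type*} [Fintype ι] [Fintype κ]
    [MeasurableSpace β] {X : ι → Ω → β} {Y : κ → Ω → β}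
    (h : iIndepFun (Sum.elim X Y) μ) (hX : ∀ i, Measurable (X i)) (hY : ∀ j, Measurable (Y j)) :
    IndepFun (fun ω i => X i ω) (fun ω j => Y j ω) μ := by
  have hXY : ∀ k, Measurable (Sum.elim X Y k) := Sum.rec hX hY
  refine (h.indepFun_finset (univ.map .inl) (univ.map .inr) ?_ hXY).comp
    (φ := fun y i => y ⟨.inl i, by simp⟩) (ψ := fun y j => y ⟨.inr j, by simp⟩) ?_ ?_
  · simp [disjoint_left]
  · fun_prop
  · fun_prop

namespace ProbabilityTheory.iIndepFun

variable {ι : Type*} [DecidableEq ι] {X : ι → Ω → ℝ} (hX : iIndepFun X μ)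
  (hXm : ∀ i, Measurable (X i))
include hX hXm

lemma integral_mul_mul_mul_eq_zero_s10 {a b c d : ι} (ha : ∫ ω, X a ω ∂μ = 0) (hab : a ≠ b)
    (hac : a ≠ c) (had : a ≠ d) : ∫ ω, X a ω * X b ω * X c ω * X d ω ∂μ = 0 := by
  have hind : IndepFun (X a) (fun ω => X b ω * X c ω * X d ω) μ := by
    have hb : b ∈ ({b, c, d} : Finset ι) := by simp
    have hc : c ∈ ({b, c, d} : Finset ι) := by simp
    have hd : d ∈ ({b, c, d} : Finset ι) := by simp
    refine (hX.indepFun_finset {a} {b, c, d} (by simp [hab, hac, had]) hXm).comp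
      (φ := fun y => y ⟨a, mem_singleton_self a⟩) (ψ := fun y => y ⟨b, hb⟩ * y ⟨c, hc⟩ * y ⟨d, hd⟩)
      ?_ ?_ <;> fun_prop
  calc ∫ ω, X a ω * X b ω * X c ω * X d ω ∂μ = ∫ ω, X a ω * (X b ω * X c ω * X d ω) ∂μ := by
        simp only [mul_assoc]
    _ = (∫ ω, X a ω ∂μ) * ∫ ω, X b ω * X c ω * X d ω ∂μ :=
        hind.integral_fun_mul_eq_mul_integral (hXm a).aestronglyMeasurable
          (((hXm b).mul (hXm c)).mul (hXm d)).aestronglyMeasurable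
    _ = 0 := by rw [ha, zero_mul]

variable (hXL4 : ∀ i, MemLp (X i) 4 μ) (hX0 : ∀ i, ∫ ω, X i ω ∂μ = 0) {m4 : ℝ}
  (hX4 : ∀ i, ∫ ω, X i ω ^ 4 ∂μ ≤ m4)
include hXL4 hX0 hX4

lemma abs_integral_mul_mul_mul_le_pairingCount (a b c d : ι) :
    |∫ ω, X a ω * X b ω * X c ω * X d ω ∂μ| ≤ m4 * pairingCount a b c d := by
  by_cases hpair : (a = b ∧ c = d) ∨ (a = c ∧ b = d) ∨ (a = d ∧ b = c)
  · have hm4 : 0 ≤ m4 := (integral_nonneg fun ω => by positivity).trans (hX4 a)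
    have hP : 1 ≤ pairingCount a b c d := by
      unfold pairingCount; split_ifs <;> first | (exfalso; tauto) | norm_num
    calc |∫ ω, X a ω * X b ω * X c ω * X d ω ∂μ| ≤ _ :=
          abs_integral_mul_mul_mul_le (hXL4 a) (hXL4 b) (hXL4 c) (hXL4 d)
      _ ≤ m4 := by linarith [hX4 a, hX4 b, hX4 c, hX4 d]
      _ ≤ m4 * pairingCount a b c d := le_mul_of_one_le_right hm4 hP
  · have hP : pairingCount a b c d = 0 := by
      unfold pairingCount; split_ifs <;> first | (exfalso; tauto) | norm_num
    have vanish := fun {p q r s : ι} (hpq : p ≠ q) (hpr : p ≠ r) (hps : p ≠ s) =>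
      hX.integral_mul_mul_mul_eq_zero_s10 hXm (d := s) (hX0 p) hpq hpr hps
    have hsingle : (a ≠ b ∧ a ≠ c ∧ a ≠ d) ∨ (b ≠ a ∧ b ≠ c ∧ b ≠ d) ∨
        (c ≠ a ∧ c ≠ b ∧ c ≠ d) ∨ (d ≠ a ∧ d ≠ b ∧ d ≠ c) := by grind
    have h0 : ∫ ω, X a ω * X b ω * X c ω * X d ω ∂μ = 0 := by
      rcases hsingle with ⟨h₁, h₂, h₃⟩ | ⟨h₁, h₂, h₃⟩ | ⟨h₁, h₂, h₃⟩ | ⟨h₁, h₂, h₃⟩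
      · exact vanish h₁ h₂ h₃
      · rw [← vanish h₁ h₂ h₃]; congr 1; ext ω; ring
      · rw [← vanish h₁ h₂ h₃]; congr 1; ext ω; ring
      · rw [← vanish h₁ h₂ h₃]; congr 1; ext ω; ring
    rw [h0, hP, abs_zero, mul_zero]

variable [Fintype ι]

lemma sum_mul_integral_mul_mul_mul_le (κ : ι → ι → ι → ι → ℝ) {C : ℝ} (hC : 0 ≤ C)
    (x y z w : ι → ℝ) (hκ : ∀ a b c d, |κ a b c d| ≤ C * |x a * y b * z c * w d|) :
    ∑ a, ∑ b, ∑ c, ∑ d, κ a b c d * ∫ ω, X a ω * X b ω * X c ω * X d ω ∂μ ≤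
      3 * m4 * C * (√(∑ a, x a ^ 2) * √(∑ a, y a ^ 2) * √(∑ a, z a ^ 2) * √(∑ a, w a ^ 2)) := by
  rcases isEmpty_or_nonempty ι with hι | ⟨⟨i⟩⟩
  · simp
  have hm4 : 0 ≤ m4 := (integral_nonneg fun ω => by positivity).trans (hX4 i)
  calc ∑ a, ∑ b, ∑ c, ∑ d, κ a b c d * ∫ ω, X a ω * X b ω * X c ω * X d ω ∂μ
      ≤ ∑ a, ∑ b, ∑ c, ∑ d, C * m4 * (|x a * y b * z c * w d| * pairingCount a b c d) := by
        refine sum_le_sum fun a _ => sum_le_sum fun b _ => sum_le_sum fun c _ =>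
          sum_le_sum fun d _ => ?_
        calc κ a b c d * ∫ ω, X a ω * X b ω * X c ω * X d ω ∂μ
            ≤ |κ a b c d| * |∫ ω, X a ω * X b ω * X c ω * X d ω ∂μ| := by
              rw [← abs_mul]; exact le_abs_self _
          _ ≤ C * |x a * y b * z c * w d| * (m4 * pairingCount a b c d) :=
              mul_le_mul (hκ a b c d)
                (hX.abs_integral_mul_mul_mul_le_pairingCount hXm hXL4 hX0 hX4 a b c d)
                (abs_nonneg _) (by positivity)
          _ = _ := by ring
    _ = C * m4 * ∑ a, ∑ b, ∑ c, ∑ d, |x a * y b * z c * w d| * pairingCount a b c d := by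
        simp only [mul_sum]
    _ ≤ C * m4 * (3 * (√(∑ a, x a ^ 2) * √(∑ a, y a ^ 2) * √(∑ a, z a ^ 2) *
          √(∑ a, w a ^ 2))) := by
        gcongr; exact sum_abs_mul_pairingCount_le x y z w
    _ = _ := by ring

lemma abs_integral_sum_mul_sum_mul_sum_mul_sum_le (x y z w : ι → ℝ) :
    |∫ ω, (∑ a, x a * X a ω) * (∑ b, y b * X b ω) * (∑ c, z c * X c ω) * (∑ d, w d * X d ω) ∂μ|
      ≤ 3 * m4 * (√(∑ a, x a ^ 2) * √(∑ a, y a ^ 2) * √(∑ a, z a ^ 2) * √(∑ a, w a ^ 2)) := by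
  have hexp : ∫ ω, (∑ a, x a * X a ω) * (∑ b, y b * X b ω) * (∑ c, z c * X c ω) *
      (∑ d, w d * X d ω) ∂μ = ∑ a, ∑ b, ∑ c, ∑ d,
        x a * y b * z c * w d * ∫ ω, X a ω * X b ω * X c ω * X d ω ∂μ := by
    simp_rw [sum_mul_sum_mul_sum_mul_sum_of_mul x y z w]
    rw [integral_sum_sum_sum_sum fun a b c d => (integrable_mul_mul_mul_of_memLp (hXL4 a)
      (hXL4 b) (hXL4 c) (hXL4 d)).const_mul _]
    simp_rw [integral_const_mul]
  have hupper := hX.sum_mul_integral_mul_mul_mul_le hXm hXL4 hX0 hX4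
    (fun a b c d => x a * y b * z c * w d) zero_le_one x y z w fun a b c d => (one_mul _).ge
  have hlower := hX.sum_mul_integral_mul_mul_mul_le hXm hXL4 hX0 hX4
    (fun a b c d => -(x a * y b * z c * w d)) zero_le_one x y z w
    fun a b c d => by rw [abs_neg, one_mul]
  simp only [neg_mul, sum_neg_distrib, mul_one] at hupper hlower
  rw [hexp, abs_le]
  constructor <;> linarith

end ProbabilityTheory.iIndepFun

lemma ProbabilityTheory.IndepFun.integral_sum_mul_pow_four {ι : Type*} [Fintype ι]
    {X A : ι → Ω → ℝ} (hXA : IndepFun (fun ω i => X i ω) (fun ω i => A i ω) μ)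
    (hXL4 : ∀ i, MemLp (X i) 4 μ) (hAL4 : ∀ i, MemLp (A i) 4 μ) :
    ∫ ω, (∑ i, X i ω * A i ω) ^ 4 ∂μ = ∑ a, ∑ b, ∑ c, ∑ d,
      (∫ ω, A a ω * A b ω * A c ω * A d ω ∂μ) * ∫ ω, X a ω * X b ω * X c ω * X d ω ∂μ := by
  have hfactor : ∀ a b c d,
      Integrable (fun ω => X a ω * X b ω * X c ω * X d ω * (A a ω * A b ω * A c ω * A d ω)) μ ∧
      ∫ ω, X a ω * X b ω * X c ω * X d ω * (A a ω * A b ω * A c ω * A d ω) ∂μ =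
        (∫ ω, A a ω * A b ω * A c ω * A d ω ∂μ) * ∫ ω, X a ω * X b ω * X c ω * X d ω ∂μ := by
    intro a b c d
    have hind : IndepFun (fun ω => X a ω * X b ω * X c ω * X d ω)
        (fun ω => A a ω * A b ω * A c ω * A d ω) μ := by
      refine hXA.comp (φ := fun x => x a * x b * x c * x d)
        (ψ := fun y => y a * y b * y c * y d) ?_ ?_ <;> fun_prop
    have hIX := integrable_mul_mul_mul_of_memLp (hXL4 a) (hXL4 b) (hXL4 c) (hXL4 d)
    have hIA := integrable_mul_mul_mul_of_memLp (hAL4 a) (hAL4 b) (hAL4 c) (hAL4 d)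
    exact ⟨hind.integrable_mul hIX hIA, by
      rw [hind.integral_fun_mul_eq_mul_integral hIX.1 hIA.1, mul_comm]⟩
  simp_rw [show ∀ s : ℝ, s ^ 4 = s * s * s * s from fun s => by ring,
    sum_mul_sum_mul_sum_mul_sum_of_mul]
  rw [integral_sum_sum_sum_sum fun a b c d => (hfactor a b c d).1]
  simp_rw [fun a b c d => (hfactor a b c d).2]

theorem integral_sum_sum_mul_mul_pow_four_le {ι κ : Type*} [Fintype ι] [DecidableEq ι]
    [Fintype κ] [DecidableEq κ] {X : ι → Ω → ℝ} {Y : κ → Ω → ℝ}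
    (hXm : ∀ i, Measurable (X i)) (hYm : ∀ j, Measurable (Y j))
    (hX : iIndepFun X μ) (hY : iIndepFun Y μ)
    (hXY : IndepFun (fun ω i => X i ω) (fun ω j => Y j ω) μ)
    (hXL4 : ∀ i, MemLp (X i) 4 μ) (hYL4 : ∀ j, MemLp (Y j) 4 μ)
    (hX0 : ∀ i, ∫ ω, X i ω ∂μ = 0) (hY0 : ∀ j, ∫ ω, Y j ω ∂μ = 0) {mX mY : ℝ}
    (hX4 : ∀ i, ∫ ω, X i ω ^ 4 ∂μ ≤ mX) (hY4 : ∀ j, ∫ ω, Y j ω ^ 4 ∂μ ≤ mY)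
    (M : Matrix ι κ ℝ) :
    ∫ ω, (∑ i, ∑ j, X i ω * M i j * Y j ω) ^ 4 ∂μ ≤
      9 * mX * mY * (∑ i, ∑ j, M i j ^ 2) ^ 2 := by
  rcases isEmpty_or_nonempty κ with hκ | ⟨⟨j₀⟩⟩
  · simp
  have hmY : 0 ≤ 3 * mY :=
    mul_nonneg zero_le_three ((integral_nonneg fun ω => by positivity).trans (hY4 j₀))
  set A : ι → Ω → ℝ := fun i ω => ∑ j, M i j * Y j ω with hA
  set r : ι → ℝ := fun i => √(∑ j, M i j ^ 2)
  have hXA : IndepFun (fun ω i => X i ω) (fun ω i => A i ω) μ :=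
    hXY.comp (φ := id) (ψ := fun (y : κ → ℝ) i => ∑ j, M i j * y j) measurable_id (by fun_prop)
  have hAL4 : ∀ i, MemLp (A i) 4 μ := fun i =>
    memLp_finsetSum _ fun j _ => (hYL4 j).const_mul (M i j)
  have hA4 : ∀ a b c d, |∫ ω, A a ω * A b ω * A c ω * A d ω ∂μ| ≤
      3 * mY * |r a * r b * r c * r d| := fun a b c d =>
    (hY.abs_integral_sum_mul_sum_mul_sum_mul_sum_le hYm hYL4 hY0 hY4 _ _ _ _).trans
      (mul_le_mul_of_nonneg_left (le_abs_self _) hmY)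
  have hrow : ∀ ω, ∑ i, ∑ j, X i ω * M i j * Y j ω = ∑ i, X i ω * A i ω := fun ω => by
    simp only [hA, mul_sum, mul_assoc]
  have hr2 : ∑ i, r i ^ 2 = ∑ i, ∑ j, M i j ^ 2 :=
    sum_congr rfl fun i _ => Real.sq_sqrt (sum_nonneg fun j _ => sq_nonneg _)
  calc ∫ ω, (∑ i, ∑ j, X i ω * M i j * Y j ω) ^ 4 ∂μ
      = ∑ a, ∑ b, ∑ c, ∑ d, (∫ ω, A a ω * A b ω * A c ω * A d ω ∂μ) *
          ∫ ω, X a ω * X b ω * X c ω * X d ω ∂μ := by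
        simp_rw [hrow]
        exact hXA.integral_sum_mul_pow_four hXL4 hAL4
    _ ≤ 3 * mX * (3 * mY) * (√(∑ i, r i ^ 2) * √(∑ i, r i ^ 2) * √(∑ i, r i ^ 2) *
          √(∑ i, r i ^ 2)) :=
        hX.sum_mul_integral_mul_mul_mul_le hXm hXL4 hX0 hX4 _ hmY r r r r hA4
    _ = 9 * mX * mY * (∑ i, ∑ j, M i j ^ 2) ^ 2 := by
        rw [show ∀ t : ℝ, t * t * t * t = t * t * (t * t) from fun t => by ring,
          Real.mul_self_sqrt (sum_nonneg fun i _ => sq_nonneg _), hr2]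
        ring

end Moments

theorem stmt_10_general {Ω : Type*} [MeasurableSpace Ω] (μ : Measure Ω)
    [IsProbabilityMeasure μ] {n : ℕ}
    (ε T : Fin n → Ω → ℝ)
    (hεm : ∀ i, Measurable (ε i)) (hTm : ∀ i, Measurable (T i))
    (hindep : iIndepFun (β := fun _ : Fin n ⊕ Fin n => ℝ)
      (Sum.elim ε T) μ)
    (hεL4 : ∀ i, MemLp (ε i) 4 μ) (hTL4 : ∀ i, MemLp (T i) 4 μ)
    (τ ε4 τ4 : ℝ)
    (hε0 : ∀ i, (∫ ω, ε i ω ∂μ) = 0)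
    (hε4 : ∀ i, (∫ ω, (ε i ω) ^ 4 ∂μ) = ε4)
    (hTmean : ∀ i, (∫ ω, T i ω ∂μ) = τ)
    (hT4 : ∀ i, (∫ ω, (T i ω - τ) ^ 4 ∂μ) = τ4)
    (M : Matrix (Fin n) (Fin n) ℝ) :
    (∫ ω, (∑ i, ∑ j, ε i ω * M i j * (T j ω - τ)) ^ 4 ∂μ) ≤
      30 * ε4 * τ4 * (∑ i, ∑ j, (M i j) ^ 2) ^ 2 := by
  rcases isEmpty_or_nonempty (Fin n) with hn | ⟨⟨i₀⟩⟩
  · simp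
  have hε4nn : 0 ≤ ε4 := hε4 i₀ ▸ integral_nonneg fun ω => by positivity
  have hτ4nn : 0 ≤ τ4 := hT4 i₀ ▸ integral_nonneg fun ω => by positivity
  have hV0 : ∀ j, ∫ ω, T j ω - τ ∂μ = 0 := fun j => by
    rw [integral_sub ((hTL4 j).integrable (by norm_num)) (integrable_const τ), hTmean j]
    simp
  have hεi := hindep.precomp Sum.inl_injective
  have hVi := (hindep.precomp Sum.inr_injective).comp (fun _ x => x - τ)
    fun _ => measurable_id.sub_const τ
  have hεV := (hindep.indepFun_sumElim hεm hTm).comp (φ := id) (ψ := fun v j => v j - τ)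
    measurable_id (by fun_prop)
  have hmain := integral_sum_sum_mul_mul_pow_four_le (Y := fun j ω => T j ω - τ) hεm
    (fun j => (hTm j).sub_const τ) hεi hVi hεV hεL4 (fun j => (hTL4 j).sub (memLp_const τ))
    hε0 hV0 (fun i => (hε4 i).le) (fun j => (hT4 j).le) M
  have := mul_nonneg (mul_nonneg hε4nn hτ4nn) (sq_nonneg (∑ i, ∑ j, M i j ^ 2))
  linarith

/-- For independent random vectors `ε` and `T` (all `2n` coordinates
mutually independent), where the coordinates of `ε` are mean zero with common variance,
common third moment and common fourth moment `ε₄`, and the coordinates of `T` have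
common mean `τ` with centered coordinates having common variance, common third moment
and common fourth moment `τ₄`, and a fixed matrix `M`:
`E[(εᵀ M (T - τ 1ₙ))⁴] ≤ 30 ε₄ τ₄ ‖M‖_F⁴`. -/
theorem stmt_10 {Ω : Type*} [MeasurableSpace Ω] (μ : Measure Ω)
    [IsProbabilityMeasure μ] {n : ℕ}
    (ε T : Fin n → Ω → ℝ)
    (hεm : ∀ i, Measurable (ε i)) (hTm : ∀ i, Measurable (T i))
    (hindep : iIndepFun (β := fun _ : Fin n ⊕ Fin n => ℝ)
      (Sum.elim ε T) μ)
    (hεL4 : ∀ i, MemLp (ε i) 4 μ) (hTL4 : ∀ i, MemLp (T i) 4 μ)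
    (τ σε2 mε3 ε4 σT2 mT3 τ4 : ℝ)
    (hε0 : ∀ i, (∫ ω, ε i ω ∂μ) = 0)
    (hεvar : ∀ i, (∫ ω, (ε i ω) ^ 2 ∂μ) = σε2)
    (hε3 : ∀ i, (∫ ω, (ε i ω) ^ 3 ∂μ) = mε3)
    (hε4 : ∀ i, (∫ ω, (ε i ω) ^ 4 ∂μ) = ε4)
    (hTmean : ∀ i, (∫ ω, T i ω ∂μ) = τ)
    (hTvar : ∀ i, (∫ ω, (T i ω - τ) ^ 2 ∂μ) = σT2)
    (hT3 : ∀ i, (∫ ω, (T i ω - τ) ^ 3 ∂μ) = mT3)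
    (hT4 : ∀ i, (∫ ω, (T i ω - τ) ^ 4 ∂μ) = τ4)
    (M : Matrix (Fin n) (Fin n) ℝ) :
    (∫ ω, (∑ i, ∑ j, ε i ω * M i j * (T j ω - τ)) ^ 4 ∂μ) ≤
      30 * ε4 * τ4 * (∑ i, ∑ j, (M i j) ^ 2) ^ 2 :=
  stmt_10_general μ ε T hεm hTm hindep hεL4 hTL4 τ ε4 τ4 hε0 hε4 hTmean hT4 M
end

section
/- Let A ∈ ℝ^{n×n} be symmetric with nonnegative entries, zero diagonal (A_{ii} = 0 for all i), and positive row sums d_i = Σ_j A_{ij} > 0; let G = D^{-1}A with D = diag(d₁,…,d_n). Let β ∈ ℝ with |β| < 1. Then I − βG is invertible and ( trace( (I − βG)^{-1} G ) )² ≥ ( β² / (1 + |β|)² ) · ( trace(G²) )². -/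
/-!
`S := D^{-1/2} A D^{-1/2} = D^{1/2} G D^{-1/2}` is symmetric, so `G = W Λ W⁻¹` with `Λ` the
real diagonal of eigenvalues `λᵢ` of `S`. The AM–GM bound `|2 Aᵢⱼ yᵢ yⱼ| ≤ Aᵢⱼ (yᵢ² + yⱼ²)`
gives `|xᵀ S x| ≤ xᵀ x`, hence `|λᵢ| ≤ 1`, and the zero diagonal gives `∑ λᵢ = tr S = 0`.
Then `tr((I - βG)⁻¹ G) = ∑ λᵢ / (1 - βλᵢ) = β ∑ λᵢ² / (1 - βλᵢ)`, and since
`0 < 1 - βλᵢ ≤ 1 + |β|` the last sum is at least `(∑ λᵢ²) / (1 + |β|) = tr(G²) / (1 + |β|) ≥ 0`.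
-/

open Matrix

section Scalar

variable {ι : Type*} [Fintype ι] {β : ℝ} {μ : ι → ℝ}

theorem one_sub_mul_mem_Ioc {a b : ℝ} (ha : |a| < 1) (hb : |b| ≤ 1) :
    1 - a * b ∈ Set.Ioc 0 (1 + |a|) := by
  have hab : |a * b| ≤ |a| := by
    rw [abs_mul]
    exact mul_le_of_le_one_right (abs_nonneg a) hb
  constructor <;> linarith [le_abs_self (a * b), neg_abs_le (a * b)]

theorem sum_div_one_sub_mul_eq_mul_sum (hμ : ∑ i, μ i = 0) (hne : ∀ i, 1 - β * μ i ≠ 0) :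
    ∑ i, μ i / (1 - β * μ i) = β * ∑ i, μ i ^ 2 / (1 - β * μ i) := by
  have hterm (i : ι) : μ i / (1 - β * μ i) = μ i + β * (μ i ^ 2 / (1 - β * μ i)) := by
    rw [div_eq_iff (hne i), add_mul, mul_assoc, div_mul_cancel₀ _ (hne i)]
    ring
  simp only [hterm, Finset.sum_add_distrib, hμ, zero_add, Finset.mul_sum]

theorem mul_sq_sum_sq_le_sq_sum_div_one_sub_mul (hβ : |β| < 1) (hμ : ∀ i, |μ i| ≤ 1)
    (hsum : ∑ i, μ i = 0) :
    β ^ 2 / (1 + |β|) ^ 2 * (∑ i, μ i ^ 2) ^ 2 ≤ (∑ i, μ i / (1 - β * μ i)) ^ 2 := by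
  have hpos (i : ι) : 0 < 1 - β * μ i := (one_sub_mul_mem_Ioc hβ (hμ i)).1
  have hle (i : ι) : 1 - β * μ i ≤ 1 + |β| := (one_sub_mul_mem_Ioc hβ (hμ i)).2
  have hlower : (∑ i, μ i ^ 2) / (1 + |β|) ≤ ∑ i, μ i ^ 2 / (1 - β * μ i) := by
    rw [Finset.sum_div]
    exact Finset.sum_le_sum fun i _ =>
      div_le_div_of_nonneg_left (sq_nonneg _) (hpos i) (hle i)
  rw [sum_div_one_sub_mul_eq_mul_sum hsum fun i => (hpos i).ne', mul_pow,
    div_mul_eq_mul_div, mul_div_assoc, ← div_pow]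
  gcongr

end Scalar

namespace Matrix

section Conj

variable {n K : Type*} [Fintype n] [DecidableEq n] [Field K] {W : Matrix n n K}

theorem inv_diagonal_of_ne_zero {ν : n → K} (h : ∀ i, ν i ≠ 0) :
    (diagonal ν)⁻¹ = diagonal ν⁻¹ :=
  inv_eq_left_inv (by rw [diagonal_mul_diagonal, ← diagonal_one]; congr; ext i; simp [h i])

omit [Fintype n] in
theorem one_sub_smul_diagonal (β : K) (μ : n → K) :
    1 - β • diagonal μ = diagonal fun i => 1 - β * μ i := by
  ext i j
  by_cases h : i = j <;> simp [h]

theorem conj_mul_conj (hW : IsUnit W) (X Y : Matrix n n K) :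
    W * X * W⁻¹ * (W * Y * W⁻¹) = W * (X * Y) * W⁻¹ := by
  have hW' : W⁻¹ * W = 1 := nonsing_inv_mul W ((isUnit_iff_isUnit_det W).1 hW)
  simp only [Matrix.mul_assoc, ← Matrix.mul_assoc W⁻¹ W, hW', Matrix.one_mul]

theorem inv_conj (hW : IsUnit W) (X : Matrix n n K) :
    (W * X * W⁻¹)⁻¹ = W * X⁻¹ * W⁻¹ := by
  rw [Matrix.mul_inv_rev, Matrix.mul_inv_rev,
    nonsing_inv_nonsing_inv W ((isUnit_iff_isUnit_det W).1 hW), Matrix.mul_assoc]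

theorem one_sub_smul_conj (hW : IsUnit W) (β : K) (X : Matrix n n K) :
    1 - β • (W * X * W⁻¹) = W * (1 - β • X) * W⁻¹ := by
  rw [Matrix.mul_sub, Matrix.sub_mul, Matrix.mul_one,
    mul_nonsing_inv W ((isUnit_iff_isUnit_det W).1 hW), Matrix.mul_smul, Matrix.smul_mul]

variable (hW : IsUnit W) {μ : n → K} {β : K}
include hW

theorem isUnit_one_sub_smul_conj_diagonal (hμ : ∀ i, 1 - β * μ i ≠ 0) :
    IsUnit (1 - β • (W * diagonal μ * W⁻¹)) := by
  rw [one_sub_smul_conj hW, one_sub_smul_diagonal, isUnit_iff_isUnit_det, det_conj hW,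
    det_diagonal]
  exact (Finset.prod_ne_zero_iff.2 fun i _ => hμ i).isUnit

theorem trace_inv_one_sub_smul_mul_conj_diagonal (hμ : ∀ i, 1 - β * μ i ≠ 0) :
    trace ((1 - β • (W * diagonal μ * W⁻¹))⁻¹ * (W * diagonal μ * W⁻¹)) =
      ∑ i, μ i / (1 - β * μ i) := by
  rw [one_sub_smul_conj hW, inv_conj hW, conj_mul_conj hW, trace_conj hW, one_sub_smul_diagonal,
    inv_diagonal_of_ne_zero hμ, diagonal_mul_diagonal, trace_diagonal]
  simp only [Pi.inv_apply, div_eq_inv_mul]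

theorem trace_conj_diagonal_mul_self :
    trace (W * diagonal μ * W⁻¹ * (W * diagonal μ * W⁻¹)) = ∑ i, μ i ^ 2 := by
  simp [conj_mul_conj hW, trace_conj hW, sq]

end Conj

variable {n : Type*} [Fintype n] [DecidableEq n]

theorem IsHermitian.abs_eigenvalues_le_one {S : Matrix n n ℝ} (hS : S.IsHermitian)
    (h : ∀ x, |x ⬝ᵥ S *ᵥ x| ≤ x ⬝ᵥ x) (i : n) : |hS.eigenvalues i| ≤ 1 := by
  set v := hS.eigenvectorBasis i
  have hv : v.ofLp ⬝ᵥ v.ofLp = 1 := by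
    have := EuclideanSpace.inner_eq_star_dotProduct v v
    rwa [star_trivial, real_inner_self_eq_norm_sq, hS.eigenvectorBasis.orthonormal.1 i, one_pow,
      eq_comm] at this
  simpa [hS.eigenvalues_eq, hv] using h v.ofLp

theorem IsHermitian.exists_isUnit_eq_conj_diagonal {S : Matrix n n ℝ} (hS : S.IsHermitian) :
    ∃ U : Matrix n n ℝ, IsUnit U ∧ S = U * diagonal hS.eigenvalues * U⁻¹ := by
  set U := hS.eigenvectorUnitary
  refine ⟨U, (Unitary.toUnits U).isUnit, ?_⟩
  have hinv : (U : Matrix n n ℝ)⁻¹ = star (U : Matrix n n ℝ) :=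
    inv_eq_left_inv (Unitary.coe_star_mul_self U)
  conv_lhs => rw [hS.spectral_theorem, Unitary.conjStarAlgAut_apply]
  rw [hinv, RCLike.ofReal_real_eq_id, Function.id_comp]

omit [DecidableEq n] in
theorem IsSymm.abs_dotProduct_mulVec_le {A : Matrix n n ℝ} (hA : A.IsSymm)
    (hpos : ∀ i j, 0 ≤ A i j) (y : n → ℝ) :
    |y ⬝ᵥ A *ᵥ y| ≤ ∑ i, (∑ j, A i j) * y i ^ 2 := by
  have hterm (i j : n) : |y i * (A i j * y j)| ≤ (A i j * y i ^ 2 + A j i * y j ^ 2) / 2 := by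
    rw [hA.apply i j, abs_le]
    constructor <;> nlinarith [mul_nonneg (hpos i j) (sq_nonneg (y i + y j)),
      mul_nonneg (hpos i j) (sq_nonneg (y i - y j))]
  calc |y ⬝ᵥ A *ᵥ y| ≤ ∑ i, ∑ j, |y i * (A i j * y j)| := by
        simp only [dotProduct, mulVec, Finset.mul_sum]
        exact (Finset.abs_sum_le_sum_abs _ _).trans
          (Finset.sum_le_sum fun i _ => Finset.abs_sum_le_sum_abs _ _)
    _ ≤ ∑ i, ∑ j, (A i j * y i ^ 2 + A j i * y j ^ 2) / 2 :=
        Finset.sum_le_sum fun i _ => Finset.sum_le_sum fun j _ => hterm i j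
    _ = ∑ i, (∑ j, A i j) * y i ^ 2 := by
        simp only [← Finset.sum_div, Finset.sum_add_distrib]
        rw [Finset.sum_comm (f := fun i j => A j i * y j ^ 2)]
        simp only [← Finset.sum_mul]
        ring

noncomputable def invSqrtRowSum (A : Matrix n n ℝ) : n → ℝ := fun i => (√(∑ j, A i j))⁻¹

noncomputable def symmNormalize (A : Matrix n n ℝ) : Matrix n n ℝ :=
  diagonal (invSqrtRowSum A) * A * diagonal (invSqrtRowSum A)

variable {A : Matrix n n ℝ}

omit [DecidableEq n] in
theorem invSqrtRowSum_ne_zero (hdeg : ∀ i, 0 < ∑ j, A i j) (i : n) : invSqrtRowSum A i ≠ 0 :=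
  inv_ne_zero (Real.sqrt_pos.2 (hdeg i)).ne'

omit [DecidableEq n] in
theorem rowSum_mul_invSqrtRowSum_sq (hdeg : ∀ i, 0 < ∑ j, A i j) (i : n) :
    (∑ j, A i j) * invSqrtRowSum A i ^ 2 = 1 := by
  rw [invSqrtRowSum, inv_pow, Real.sq_sqrt (hdeg i).le, mul_inv_cancel₀ (hdeg i).ne']

theorem isHermitian_symmNormalize (hA : A.IsSymm) : (symmNormalize A).IsHermitian := by
  simp [isHermitian_iff_isSymm, IsSymm, symmNormalize, transpose_mul, hA.eq, Matrix.mul_assoc]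

theorem trace_symmNormalize (hA : ∀ i, A i i = 0) : (symmNormalize A).trace = 0 := by
  simp [symmNormalize, trace, hA]

theorem abs_dotProduct_symmNormalize_mulVec_le (hA : A.IsSymm) (hpos : ∀ i j, 0 ≤ A i j)
    (hdeg : ∀ i, 0 < ∑ j, A i j) (x : n → ℝ) :
    |x ⬝ᵥ symmNormalize A *ᵥ x| ≤ x ⬝ᵥ x := by
  set r := invSqrtRowSum A
  have hx : x ⬝ᵥ symmNormalize A *ᵥ x = (r * x) ⬝ᵥ A *ᵥ (r * x) := by
    simp only [symmNormalize, dotProduct, mulVec, mul_diagonal, diagonal_mul, Pi.mul_apply,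
      Finset.mul_sum]
    exact Finset.sum_congr rfl fun i _ => Finset.sum_congr rfl fun j _ => by ring
  have hd (i : n) : (∑ j, A i j) * (r * x) i ^ 2 = x i * x i := by
    rw [Pi.mul_apply, mul_pow, ← mul_assoc, rowSum_mul_invSqrtRowSum_sq hdeg, one_mul, sq]
  rw [hx]
  refine (hA.abs_dotProduct_mulVec_le hpos _).trans_eq ?_
  simp only [hd, dotProduct]

theorem rowNormalize_eq_conj_symmNormalize (hdeg : ∀ i, 0 < ∑ j, A i j) :
    (of fun i j => A i j / ∑ k, A i k) =
      diagonal (invSqrtRowSum A) * symmNormalize A * (diagonal (invSqrtRowSum A))⁻¹ := by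
  rw [inv_diagonal_of_ne_zero (invSqrtRowSum_ne_zero hdeg)]
  ext i j
  have hi := rowSum_mul_invSqrtRowSum_sq hdeg i
  have hj := invSqrtRowSum_ne_zero hdeg j
  have hd := (hdeg i).ne'
  simp only [symmNormalize, of_apply, mul_diagonal, diagonal_mul, Pi.inv_apply]
  field_simp
  linear_combination -A i j * hi

end Matrix

/-- Let `A` be a symmetric nonnegative hollow matrix with positive row
sums, `G = D⁻¹A` its row-normalization, and `|β| < 1`. Then `I - βG` is invertible and
`(trace((I - βG)⁻¹ G))² ≥ (β² / (1 + |β|)²) (trace G²)²`. -/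
theorem stmt_11 {n : ℕ} (A : Matrix (Fin n) (Fin n) ℝ)
    (hsym : A.IsSymm) (hpos : ∀ i j, 0 ≤ A i j)
    (hhollow : ∀ i, A i i = 0)
    (hdeg : ∀ i, 0 < ∑ j, A i j)
    (G : Matrix (Fin n) (Fin n) ℝ)
    (hG : G = Matrix.of fun i j => A i j / ∑ k, A i k)
    (β : ℝ) (hβ : |β| < 1) :
    IsUnit (1 - β • G) ∧
      (β ^ 2 / (1 + |β|) ^ 2) * (Matrix.trace (G * G)) ^ 2 ≤
        (Matrix.trace ((1 - β • G)⁻¹ * G)) ^ 2 := by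
  have hS := isHermitian_symmNormalize hsym
  set μ := hS.eigenvalues
  obtain ⟨U, hU, hSU⟩ := hS.exists_isUnit_eq_conj_diagonal
  set P := diagonal (invSqrtRowSum A)
  have hP : IsUnit P :=
    isUnit_diagonal.2 (Pi.isUnit_iff.2 fun i => (invSqrtRowSum_ne_zero hdeg i).isUnit)
  have hGμ : G = P * U * diagonal μ * (P * U)⁻¹ := by
    rw [hG, rowNormalize_eq_conj_symmNormalize hdeg, hSU, Matrix.mul_inv_rev]
    simp only [Matrix.mul_assoc]
    rfl
  have hμ : ∀ i, |μ i| ≤ 1 :=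
    hS.abs_eigenvalues_le_one (abs_dotProduct_symmNormalize_mulVec_le hsym hpos hdeg)
  have hsum : ∑ i, μ i = 0 := by
    simpa [trace_symmNormalize hhollow] using hS.trace_eq_sum_eigenvalues.symm
  have hne (i : Fin n) : 1 - β * μ i ≠ 0 := (one_sub_mul_mem_Ioc hβ (hμ i)).1.ne'
  have hW := hP.mul hU
  rw [hGμ, trace_inv_one_sub_smul_mul_conj_diagonal hW hne, trace_conj_diagonal_mul_self hW]
  exact ⟨isUnit_one_sub_smul_conj_diagonal hW hne,
    mul_sq_sum_sq_le_sq_sum_div_one_sub_mul hβ hμ hsum⟩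
end

section
/- Let μ ∈ ℝ^d and let X ∈ ℝ^{n×d} be a matrix each of whose rows X_i satisfies X_iᵀ μ ≠ 0, and set H = diag(X₁ᵀμ, …, X_nᵀμ) ∈ ℝ^{n×n}. Suppose Y₁, …, Y_d and Z₁, …, Z_d are rows of X such that Y₁,…,Y_d are linearly independent and Z₁,…,Z_d are linearly independent; collect them into invertible matrices Y, Z ∈ ℝ^{d×d}, and set H_Y = diag(Y₁ᵀμ,…,Y_dᵀμ), H_Z = diag(Z₁ᵀμ,…,Z_dᵀμ). If the d×d matrix Z^{-1} H_Z^{-1} Z − Y^{-1} H_Y^{-1} Y is invertible, then the n×2d matrix M = [X H^{-1}X] has rank 2d. -/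
/-!
If `(a, b)` lies in the kernel of `[X  diag(w) X]`, then every row `i` of `X` satisfies
`Xᵢ a = -wᵢ Xᵢ b`. Reading this off on the `d` rows of an invertible square block `S` of `X`
gives `a = -S⁻¹ diag(w_S) S b`. Doing so for two such blocks `Y` and `Z` and subtracting yields
`(Z⁻¹ diag(w_Z) Z - Y⁻¹ diag(w_Y) Y) b = 0`, so `b = 0` when this difference is invertible, and
then `a = 0`. Hence `[X  diag(w) X]` has trivial kernel, i.e. full column rank.
-/

open Matrix

namespace Matrix

variable {m ι K : Type*} [Fintype m] [Fintype ι] [DecidableEq m] [DecidableEq ι] [Field K]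

omit [Fintype m] [DecidableEq m] [DecidableEq ι] in
theorem rank_eq_card_of_injective_mulVec {A : Matrix m ι K} (hA : Function.Injective A.mulVec) :
    A.rank = Fintype.card ι := by
  rw [rank, LinearMap.finrank_range_of_inj hA, Module.finrank_fintype_fun_eq_card]

omit [Fintype ι] [DecidableEq ι] in
theorem inv_diagonal_of_ne_zero_s12 {w : m → K} (hw : ∀ i, w i ≠ 0) :
    (diagonal w)⁻¹ = diagonal fun i => (w i)⁻¹ :=
  inv_eq_right_inv <| by simp [diagonal_mul_diagonal, hw]

omit [Fintype m] [DecidableEq m] [DecidableEq ι] in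
theorem submatrix_id_mulVec (A : Matrix m ι K) (s : ι → m) (v : ι → K) :
    A.submatrix s id *ᵥ v = (A *ᵥ v) ∘ s :=
  rfl

theorem submatrix_id_diagonal_mul (A : Matrix m ι K) (w : m → K) (s : ι → m) :
    (diagonal w * A).submatrix s id = diagonal (w ∘ s) * A.submatrix s id := by
  ext k j
  simp [diagonal_mul]

theorem eq_neg_mulVec_of_mulVec_add_diagonal_mul_mulVec_eq_zero {X : Matrix m ι K} {w : m → K}
    {a b : ι → K} (h : X *ᵥ a + (diagonal w * X) *ᵥ b = 0) {s : ι → m}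
    (hs : IsUnit (X.submatrix s id)) :
    a = -(((X.submatrix s id)⁻¹ * diagonal (w ∘ s) * X.submatrix s id) *ᵥ b) := by
  set S := X.submatrix s id
  have hrows : S *ᵥ a = -((diagonal (w ∘ s) * S) *ᵥ b) := by
    rw [eq_neg_iff_add_eq_zero, ← submatrix_id_diagonal_mul, submatrix_id_mulVec,
      submatrix_id_mulVec, ← Pi.add_comp, h, Pi.zero_comp]
  calc a = S⁻¹ *ᵥ (S *ᵥ a) := by
        rw [mulVec_mulVec, nonsing_inv_mul S ((isUnit_iff_isUnit_det S).mp hs), one_mulVec]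
    _ = _ := by rw [hrows, mulVec_neg, mulVec_mulVec, Matrix.mul_assoc]

theorem injective_mulVec_fromCols_diagonal_mul {X : Matrix m ι K} {w : m → K} {y z : ι → m}
    (hy : IsUnit (X.submatrix y id)) (hz : IsUnit (X.submatrix z id))
    (hyz : IsUnit ((X.submatrix z id)⁻¹ * diagonal (w ∘ z) * X.submatrix z id
      - (X.submatrix y id)⁻¹ * diagonal (w ∘ y) * X.submatrix y id)) :
    Function.Injective (fromCols X (diagonal w * X)).mulVec := by
  refine (injective_iff_map_eq_zero (fromCols X (diagonal w * X)).mulVecLin).mpr fun v hv => ?_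
  set a := v ∘ Sum.inl
  set b := v ∘ Sum.inr
  have hab : X *ᵥ a + (diagonal w * X) *ᵥ b = 0 := by simpa using hv
  have hb : b = 0 := by
    refine mulVec_injective_iff_isUnit.mpr hyz ?_
    rw [mulVec_zero, sub_mulVec, sub_eq_zero, ← neg_inj,
      ← eq_neg_mulVec_of_mulVec_add_diagonal_mul_mulVec_eq_zero hab hz,
      ← eq_neg_mulVec_of_mulVec_add_diagonal_mul_mulVec_eq_zero hab hy]
  have ha : a = 0 := by
    rw [eq_neg_mulVec_of_mulVec_add_diagonal_mul_mulVec_eq_zero hab hy, hb, mulVec_zero, neg_zero]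
  ext (i | i)
  · exact congrFun ha i
  · exact congrFun hb i

theorem rank_fromCols_diagonal_mul {X : Matrix m ι K} {w : m → K} {y z : ι → m}
    (hy : IsUnit (X.submatrix y id)) (hz : IsUnit (X.submatrix z id))
    (hyz : IsUnit ((X.submatrix z id)⁻¹ * diagonal (w ∘ z) * X.submatrix z id
      - (X.submatrix y id)⁻¹ * diagonal (w ∘ y) * X.submatrix y id)) :
    (fromCols X (diagonal w * X)).rank = Fintype.card ι + Fintype.card ι := by
  rw [rank_eq_card_of_injective_mulVec (injective_mulVec_fromCols_diagonal_mul hy hz hyz),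
    Fintype.card_sum]

end Matrix

/-- Sufficient condition for `[X  H⁻¹X]` to have full rank `2d`.
Here `H = diag(X₁ᵀμ, …, Xₙᵀμ)`, and `Y, Z ∈ ℝ^{d×d}` are invertible matrices formed
from `d` rows of `X` each (selected by the index maps `y` and `z`). -/
theorem stmt_12 {n d : ℕ} (μ : Fin d → ℝ) (X : Matrix (Fin n) (Fin d) ℝ)
    (hX : ∀ i, dotProduct (X i) μ ≠ 0)
    (y z : Fin d → Fin n)
    (Y Z : Matrix (Fin d) (Fin d) ℝ)
    (hY : Y = X.submatrix y id) (hZ : Z = X.submatrix z id)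
    (hYind : LinearIndependent ℝ (fun k => X (y k)))
    (hZind : LinearIndependent ℝ (fun k => X (z k)))
    (H HY HZ : Matrix _ _ ℝ)
    (hH : H = Matrix.diagonal fun i => dotProduct (X i) μ)
    (hHY : HY = Matrix.diagonal fun k => dotProduct (X (y k)) μ)
    (hHZ : HZ = Matrix.diagonal fun k => dotProduct (X (z k)) μ)
    (hinv : IsUnit (Z⁻¹ * HZ⁻¹ * Z - Y⁻¹ * HY⁻¹ * Y)) :
    (Matrix.fromCols X (H⁻¹ * X)).rank = 2 * d := by
  subst hY hZ hH hHY hHZ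
  set w : Fin n → ℝ := fun i => (X i ⬝ᵥ μ)⁻¹
  have hYw : (diagonal fun k => X (y k) ⬝ᵥ μ)⁻¹ = diagonal (w ∘ y) :=
    inv_diagonal_of_ne_zero_s12 fun k => hX (y k)
  have hZw : (diagonal fun k => X (z k) ⬝ᵥ μ)⁻¹ = diagonal (w ∘ z) :=
    inv_diagonal_of_ne_zero_s12 fun k => hX (z k)
  rw [hYw, hZw] at hinv
  rw [inv_diagonal_of_ne_zero_s12 hX, rank_fromCols_diagonal_mul
    (linearIndependent_rows_iff_isUnit.mp hYind) (linearIndependent_rows_iff_isUnit.mp hZind) hinv,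
    Fintype.card_fin, two_mul]
end

section
/- Let δ₁, …, δ_d ∈ ℝ^d be linearly independent vectors and μ ∈ ℝ^d with δ_kᵀ μ ≠ 0 for every k. Let X ∈ ℝ^{n×d} be a matrix each of whose rows equals some δ_k, with every δ_k occurring as a row at least once, and set H = diag(X₁ᵀμ, …, X_nᵀμ). Then the n×2d matrix [X H^{-1}X] has rank exactly d; in particular the columns of H^{-1}X lie in the column span of X. -/
/-!
Let `Δ` be the invertible matrix with rows `δ_k` and `c_k = δ_kᵀμ`. Then `X` is `Δ` with its
rows selected by `z`, and `H = diag(c ∘ z)`, so `H⁻¹X` is the same row selection of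
`diag(c)⁻¹Δ = Δ (Δ⁻¹ diag(c)⁻¹ Δ)`; hence `H⁻¹X = XM` and the columns of `H⁻¹X` lie in
the column span of `X`. Selecting rows by a surjection does not change the rank, so
`rank [X  H⁻¹X] = rank X = rank Δ = d`.
-/

open Matrix

namespace Matrix

variable {R : Type*} {m n o ι : Type*} [Fintype n]

theorem col_mul_mem_span_col [CommSemiring R] (A : Matrix m n R) (B : Matrix n o R) (k : o) :
    (A * B).col k ∈ Submodule.span R (Set.range A.col) := by
  rw [← range_mulVecLin]
  exact ⟨B.col k, by ext i; simp [mulVec, dotProduct, mul_apply]⟩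

theorem rank_fromCols_of_col_mem_span [Fintype o] [CommSemiring R] (A : Matrix m n R)
    (B : Matrix m o R) (hB : ∀ k, B.col k ∈ Submodule.span R (Set.range A.col)) :
    (fromCols A B).rank = A.rank := by
  have hrange : Set.range (fromCols A B).col = Set.range A.col ∪ Set.range B.col :=
    Sum.range_eq _
  rw [rank_eq_finrank_span_cols, rank_eq_finrank_span_cols, hrange, Submodule.span_union,
    sup_eq_left.mpr (Submodule.span_le.mpr (Set.range_subset_iff.mpr hB))]

theorem rank_submatrix_of_surjective [Fintype m] [CommRing R] [StrongRankCondition R]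
    (A : Matrix m n R) {z : ι → m} (hz : Function.Surjective z) :
    (A.submatrix z id).rank = A.rank := by
  refine (rank_submatrix_le A z id).antisymm ?_
  calc A.rank = ((A.submatrix z id).submatrix (Function.surjInv hz) id).rank := by
        rw [submatrix_submatrix, Function.comp_id, Function.comp_surjInv hz, submatrix_id_id]
    _ ≤ (A.submatrix z id).rank := rank_submatrix_le _ _ _

theorem inv_diagonal_comp_mul_submatrix {K : Type*} [Field K] [Fintype ι] [DecidableEq ι]
    [Fintype m] [DecidableEq m] (D : Matrix ι ι K) (hD : IsUnit D) (v : ι → K)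
    (hv : ∀ k, v k ≠ 0) (z : m → ι) :
    (diagonal (v ∘ z))⁻¹ * D.submatrix z id =
      D.submatrix z id * (D⁻¹ * (diagonal v⁻¹ * D)) := by
  have hinv : (diagonal (v ∘ z))⁻¹ = diagonal (v⁻¹ ∘ z) :=
    inv_eq_left_inv (by rw [diagonal_mul_diagonal]; simp [hv])
  have hconj : diagonal v⁻¹ * D = D * (D⁻¹ * (diagonal v⁻¹ * D)) :=
    (mul_nonsing_inv_cancel_left D _ ((isUnit_iff_isUnit_det D).mp hD)).symm
  rw [hinv]
  calc diagonal (v⁻¹ ∘ z) * D.submatrix z id = (diagonal v⁻¹ * D).submatrix z id := by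
        ext i k; simp [diagonal_mul]
    _ = (D * (D⁻¹ * (diagonal v⁻¹ * D))).submatrix z id := by rw [← hconj]
    _ = D.submatrix z id * (D⁻¹ * (diagonal v⁻¹ * D)) := by
        rw [submatrix_mul _ _ _ _ _ Function.bijective_id, submatrix_id_id]

end Matrix

/-- Rank deficiency for stochastic blockmodels without degree
correction: if every row of `X` is one of `d` linearly independent vectors
`δ₁, …, δ_d` (each occurring at least once) and `H = diag(X₁ᵀμ, …, Xₙᵀμ)` with each
`δ_kᵀμ ≠ 0`, then `[X  H⁻¹X]` has rank exactly `d`, and every column of `H⁻¹X` lies in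
the column span of `X`. -/
theorem stmt_13 {n d : ℕ} (delta : Fin d → Fin d → ℝ)
    (hind : LinearIndependent ℝ delta)
    (μ : Fin d → ℝ) (hμ : ∀ k, dotProduct (delta k) μ ≠ 0)
    (z : Fin n → Fin d) (hsurj : Function.Surjective z)
    (X : Matrix (Fin n) (Fin d) ℝ) (hX : ∀ i, X i = delta (z i))
    (H : Matrix (Fin n) (Fin n) ℝ)
    (hH : H = Matrix.diagonal fun i => dotProduct (X i) μ) :
    (Matrix.fromCols X (H⁻¹ * X)).rank = d ∧
      ∀ k : Fin d, (fun i => (H⁻¹ * X) i k) ∈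
        Submodule.span ℝ (Set.range fun l : Fin d => (fun i => X i l)) := by
  set D : Matrix (Fin d) (Fin d) ℝ := of delta
  have hD : IsUnit D := linearIndependent_rows_iff_isUnit.mp hind
  have hXD : X = D.submatrix z id := funext hX
  have hHX : H⁻¹ * X = X * (D⁻¹ * (diagonal (fun k => delta k ⬝ᵥ μ)⁻¹ * D)) := by
    rw [hH, hXD]
    exact inv_diagonal_comp_mul_submatrix D hD _ hμ z
  have hcols (k : Fin d) : (H⁻¹ * X).col k ∈ Submodule.span ℝ (Set.range X.col) := by
    rw [hHX]
    exact col_mul_mem_span_col _ _ k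
  refine ⟨?_, hcols⟩
  rw [rank_fromCols_of_col_mem_span _ _ hcols, hXD, rank_submatrix_of_surjective _ hsurj,
    rank_of_isUnit _ hD, Fintype.card_fin]
end
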